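/- arXiv:2304.12135 — 6 statements merged into one kernel-verified Lean document; each statement's English description precedes it below -/
import Mathlib

section
/- For every full-rank lattice Λ in ℝ^n, there exists a basis B = {b_1,...,b_n} of Λ that is strongly reduced, i.e., (1) there exist linearly independent lattice vectors v_1,...,v_n with ‖v_i‖ = λ_i(Λ) such that writing v_i = Σ_j x_j^{(i)} b_j with x_j^{(i)} ∈ ℤ, one has x_i^{(i)} ≠ 0 and x_j^{(i)} = 0 for all j > i, and (2) for each i, ‖b_i‖ ≤ ‖b_i + Σ_{j<i} x_j b_j‖ for all integers x_j. -/
open Finset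
open scoped RealInnerProductSpace

noncomputable def latticeOf {n : ℕ} (b : Fin n → EuclideanSpace ℝ (Fin n)) :
    AddSubgroup (EuclideanSpace ℝ (Fin n)) := AddSubgroup.closure (Set.range b)

/-- The `i`-th successive minimum of a lattice `L` (with `i ≥ 1`): the least `r ≥ 0`
such that the closed ball of radius `r` contains `i` linearly independent lattice vectors. -/
noncomputable def succMin {n : ℕ} (L : AddSubgroup (EuclideanSpace ℝ (Fin n))) (i : ℕ) : ℝ :=
  sInf {r : ℝ | 0 ≤ r ∧ ∃ v : Fin i → EuclideanSpace ℝ (Fin n),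
    (∀ j, v j ∈ L) ∧ LinearIndependent ℝ v ∧ ∀ j, ‖v j‖ ≤ r}

/-- A basis `b` of the full-rank lattice it generates is *strongly reduced* if
(1) there are linearly independent lattice vectors `v i` realizing the successive minima whose
integer coordinates over `b` have nonzero `i`-th coordinate and vanish beyond `i`, and
(2) each `b i` is shortest in its coset modulo the preceding basis vectors. -/
def StronglyReduced {n : ℕ} (b : Fin n → EuclideanSpace ℝ (Fin n)) : Prop :=
  (∃ v : Fin n → EuclideanSpace ℝ (Fin n), ∃ x : Fin n → Fin n → ℤ,
    LinearIndependent ℝ v ∧ (∀ i, v i ∈ latticeOf b) ∧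
    (∀ i : Fin n, ‖v i‖ = succMin (latticeOf b) ((i : ℕ) + 1)) ∧
    (∀ i, v i = ∑ j, x i j • b j) ∧
    (∀ i, x i i ≠ 0) ∧ (∀ i j, i < j → x i j = 0)) ∧
  (∀ i : Fin n, ∀ c : Fin n → ℤ,
    ‖b i‖ ≤ ‖b i + ∑ j ∈ Finset.univ.filter (· < i), c j • b j‖)

/-! Choose lattice vectors `v₀, …, vₙ₋₁` greedily, each a shortest lattice vector outside the span
of the previous ones; they realise the successive minima. Let `Vᵢ` be the span of `v₀, …, vᵢ₋₁`.
The `i`-th coordinate along `v` maps `Λ ∩ Vᵢ₊₁` onto a subgroup of `ℝ` that contains `1` and,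
after reducing modulo `ℤv₀ + ⋯ + ℤvₙ₋₁`, has only finitely many points in `(0, 1]`; so it is
cyclic. A lattice vector of `Vᵢ₊₁` whose coordinate generates it, replaced by a shortest element of
its coset modulo `Λ ∩ Vᵢ`, is `bᵢ`. Inductively `Λ ∩ Vᵢ = ℤb₀ + ⋯ + ℤbᵢ₋₁`, so `b` is a basis of
`Λ` with the same flag as `v`, which makes the coordinates of the `vᵢ` triangular. -/

open Submodule

variable {E : Type*} [NormedAddCommGroup E] [NormedSpace ℝ E]

section Discrete

variable [FiniteDimensional ℝ E]

theorem AddSubgroup.finite_inter_closedBall (L : AddSubgroup E) [DiscreteTopology L] (R : ℝ) :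
    ((L : Set E) ∩ Metric.closedBall 0 R).Finite :=
  Set.inter_comm _ _ ▸ Metric.finite_isBounded_inter_isClosed
    (isDiscrete_iff_discreteTopology.mpr ‹_›) Metric.isBounded_closedBall L.isClosed_of_discrete

theorem AddSubgroup.exists_norm_le_of_subset {L : AddSubgroup E} [DiscreteTopology L] {S : Set E}
    (hS : S ⊆ L) (hne : S.Nonempty) : ∃ a ∈ S, ∀ x ∈ S, ‖a‖ ≤ ‖x‖ := by
  obtain ⟨u, hu⟩ := hne
  have hfin : Set.Finite (S ∩ Metric.closedBall 0 ‖u‖) :=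
    (L.finite_inter_closedBall ‖u‖).subset (Set.inter_subset_inter_left _ hS)
  obtain ⟨a, ⟨haS, -⟩, hmin⟩ := Set.exists_min_image _ norm hfin ⟨u, hu, by simp⟩
  refine ⟨a, haS, fun x hx => ?_⟩
  rcases le_total ‖x‖ ‖u‖ with hxu | hux
  · exact hmin x ⟨hx, by simpa using hxu⟩
  · exact (hmin u ⟨hu, by simp⟩).trans hux

end Discrete

structure IsGreedy (L : AddSubgroup E) {k : ℕ} (v : Fin k → E) : Prop where
  mem : ∀ j, v j ∈ L
  linearIndependent : LinearIndependent ℝ v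
  norm_le : ∀ j, ∀ w ∈ L, w ∉ span ℝ (v '' Set.Iio j) → ‖v j‖ ≤ ‖w‖

theorem Fin.snoc_image_Iio_castSucc {α : Type*} {k : ℕ} (v : Fin k → α) (a : α) (j : Fin k) :
    (Fin.snoc v a : Fin (k + 1) → α) '' Set.Iio j.castSucc = v '' Set.Iio j := by
  rw [← Fin.image_castSucc_Iio, Set.image_image]
  simp

theorem Fin.snoc_image_Iio_last {α : Type*} {k : ℕ} (v : Fin k → α) (a : α) :
    (Fin.snoc v a : Fin (k + 1) → α) '' Set.Iio (Fin.last k) = Set.range v := by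
  have : Set.Iio (Fin.last k) = Set.range Fin.castSucc := by
    ext i; simp [Fin.lt_last_iff_ne_last, Fin.ext_iff]; omega
  rw [this, ← Set.range_comp, Fin.snoc_comp_castSucc]

theorem IsGreedy.snoc {L : AddSubgroup E} {k : ℕ} {v : Fin k → E} (hv : IsGreedy L v) {a : E}
    (haL : a ∈ L) (ha : a ∉ span ℝ (Set.range v))
    (hmin : ∀ w ∈ L, w ∉ span ℝ (Set.range v) → ‖a‖ ≤ ‖w‖) :
    IsGreedy L (Fin.snoc v a : Fin (k + 1) → E) where
  mem j := by cases j using Fin.lastCases <;> simp [haL, hv.mem]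
  linearIndependent := linearIndependent_finSnoc.mpr ⟨hv.linearIndependent, ha⟩
  norm_le j := by
    cases j using Fin.lastCases with
    | last => simpa [Fin.snoc_image_Iio_last] using hmin
    | cast j => simpa [Fin.snoc_image_Iio_castSucc] using hv.norm_le j

theorem exists_isGreedy [FiniteDimensional ℝ E] {L : AddSubgroup E} [DiscreteTopology L]
    (hL : span ℝ (L : Set E) = ⊤) {k : ℕ} (hk : k ≤ Module.finrank ℝ E) :
    ∃ v : Fin k → E, IsGreedy L v := by
  induction k with
  | zero => exact ⟨Fin.elim0, ⟨finZeroElim, linearIndependent_empty_type, finZeroElim⟩⟩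
  | succ k ih =>
    obtain ⟨v, hv⟩ := ih (by omega)
    obtain ⟨w, hwL, hw⟩ : ∃ w ∈ L, w ∉ span ℝ (Set.range v) := by
      by_contra! hcon
      have htop : span ℝ (L : Set E) ≤ span ℝ (Set.range v) := span_le.mpr hcon
      rw [hL] at htop
      have := (Submodule.finrank_mono htop).trans (finrank_range_le_card (R := ℝ) v)
      simp at this
      omega
    obtain ⟨a, ⟨haL, ha⟩, hmin⟩ := AddSubgroup.exists_norm_le_of_subset
      (S := {w | w ∈ L ∧ w ∉ span ℝ (Set.range v)}) (fun _ hw => hw.1) ⟨w, hwL, hw⟩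
    exact ⟨_, hv.snoc haL ha fun w hwL hw => hmin w ⟨hwL, hw⟩⟩

theorem IsGreedy.norm_mono {L : AddSubgroup E} {k : ℕ} {v : Fin k → E} (hv : IsGreedy L v) :
    Monotone (‖v ·‖) :=
  fun j i hji => hv.norm_le j (v i) (hv.mem i)
    (hv.linearIndependent.notMem_span_image (by simpa using hji))

theorem IsGreedy.norm_eq_succMin {n : ℕ} {L : AddSubgroup (EuclideanSpace ℝ (Fin n))} {k : ℕ}
    {v : Fin k → EuclideanSpace ℝ (Fin n)} (hv : IsGreedy L v) (i : Fin k) :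
    ‖v i‖ = succMin L ((i : ℕ) + 1) := by
  have hvi : ‖v i‖ ∈ {r : ℝ | 0 ≤ r ∧ ∃ w : Fin ((i : ℕ) + 1) → EuclideanSpace ℝ (Fin n),
      (∀ j, w j ∈ L) ∧ LinearIndependent ℝ w ∧ ∀ j, ‖w j‖ ≤ r} :=
    ⟨norm_nonneg _, v ∘ Fin.castLE i.isLt, fun j => hv.mem _,
      hv.linearIndependent.comp _ (Fin.castLE_injective _),
      fun j => hv.norm_mono (Fin.le_iff_val_le_val.mpr (by simp; omega))⟩
  refine le_antisymm (le_csInf ⟨_, hvi⟩ ?_) (csInf_le ⟨0, fun r hr => hr.1⟩ hvi)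
  rintro r ⟨-, w, hwL, hw, hwr⟩
  obtain ⟨j, hj⟩ : ∃ j, w j ∉ span ℝ (v '' Set.Iio i) := by
    classical
    by_contra! hcon
    have hcard := linearIndependent_le_span_aux' w hw ((Finset.Iio i).image v : Set _)
      (by rintro _ ⟨j, rfl⟩; simpa using hcon j)
    have := (Finset.Iio i).card_image_le (f := v)
    simp only [Fintype.card_fin, Finset.coe_sort_coe, Fintype.card_coe, Fin.card_Iio]
      at hcard this
    omega
  exact (hv.norm_le i (w j) (hwL j) hj).trans (hwr j)

theorem Module.Basis.mem_flag_castSucc_of_coord_eq_zero {R M : Type*} [CommRing R]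
    [AddCommGroup M] [Module R M] {n : ℕ} (b : Basis (Fin n) R M) {i : Fin n} {m : M}
    (hm : m ∈ b.flag i.succ) (hi : b.coord i m = 0) : m ∈ b.flag i.castSucc := by
  rw [b.flag_succ, Submodule.mem_sup] at hm
  obtain ⟨_, hr, y, hy, rfl⟩ := hm
  obtain ⟨r, rfl⟩ := mem_span_singleton.mp hr
  have hy0 : b.coord i y = 0 := b.flag_le_ker_coord le_rfl hy
  simp_all

theorem Module.Basis.span_image_eq_flag {R M : Type*} [Ring R] [AddCommGroup M] [Module R M]
    {L : AddSubgroup M} {n : ℕ} (b : Basis (Fin n) R M) (hb : ∀ j, b j ∈ L) {c : Fin n → M}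
    {k : Fin (n + 1)}
    (hc : AddSubgroup.closure (c '' {j | j.castSucc < k}) = L ⊓ (b.flag k).toAddSubgroup) :
    span R (c '' {j | j.castSucc < k}) = b.flag k := by
  apply le_antisymm
  · refine span_le.mpr fun x hx => ?_
    have hx' : x ∈ L ⊓ (b.flag k).toAddSubgroup := hc ▸ AddSubgroup.subset_closure hx
    exact (AddSubgroup.mem_inf.mp hx').2
  · refine b.flag_le_iff.mpr fun j hj => ?_
    have hbj : b j ∈ AddSubgroup.closure (c '' {j | j.castSucc < k}) :=
      hc ▸ AddSubgroup.mem_inf.mpr ⟨hb j, b.self_mem_flag hj⟩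
    exact (AddSubgroup.closure_le (span R _).toAddSubgroup).mpr subset_span hbj

section Flag

variable {L : AddSubgroup E} [DiscreteTopology L]

theorem Module.Basis.finite_coord_image_inter_Ioc {ι : Type*} [Fintype ι] (b : Basis ι ℝ E)
    (hb : ∀ j, b j ∈ L) (i : ι) : (b.coord i '' L ∩ Set.Ioc 0 1).Finite := by
  have : FiniteDimensional ℝ E := b.finiteDimensional_of_finite
  have hbL : ∀ x ∈ span ℤ (Set.range b), x ∈ L :=
    fun x hx => span_le (p := L.toIntSubmodule).mpr (by rintro _ ⟨j, rfl⟩; exact hb j) hx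
  refine ((L.finite_inter_closedBall (∑ j, ‖b j‖)).image (b.coord i)).subset ?_
  rintro _ ⟨⟨w, hwL, rfl⟩, ht0, ht1⟩
  rcases ht1.lt_or_eq with ht1 | ht1
  · refine ⟨ZSpan.fract b w, ⟨?_, ?_⟩, ?_⟩
    · exact sub_mem hwL (hbL _ (ZSpan.floor b w).2)
    · exact mem_closedBall_zero_iff.mpr (ZSpan.norm_fract_le b w)
    · simpa [ZSpan.repr_fract_apply] using Int.fract_eq_self.mpr ⟨ht0.le, ht1⟩
  · refine ⟨b i, ⟨hb i, ?_⟩, by simpa using ht1.symm⟩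
    exact mem_closedBall_zero_iff.mpr
      (Finset.single_le_sum (fun j _ => norm_nonneg (b j)) (Finset.mem_univ i))

theorem Module.Basis.exists_coord_eq_zsmul {ι : Type*} [Fintype ι] (b : Basis ι ℝ E)
    (hb : ∀ j, b j ∈ L) (i : ι) {G : AddSubgroup E} (hGL : G ≤ L) (hi : b i ∈ G) :
    ∃ a ∈ G, ∀ w ∈ G, ∃ q : ℤ, b.coord i w = q • b.coord i a := by
  set H := G.map (b.coord i).toAddMonoidHom
  have hfin : ((H : Set ℝ) ∩ Set.Ioc 0 1).Finite :=
    (b.finite_coord_image_inter_Ioc hb i).subset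
      (Set.inter_subset_inter_left _ (Set.image_mono hGL))
  obtain ⟨m, ⟨hmH, hm0, hm1⟩, hmin⟩ :=
    Set.exists_min_image _ id hfin ⟨1, ⟨b i, hi, by simp⟩, by norm_num⟩
  have hleast : IsLeast {t | t ∈ H ∧ 0 < t} m :=
    ⟨⟨hmH, hm0⟩, fun t ⟨htH, ht0⟩ => (le_or_gt t 1).elim
      (fun ht1 => hmin t ⟨htH, ht0, ht1⟩) (fun ht1 => hm1.trans ht1.le)⟩
  obtain ⟨a, haG, rfl⟩ := hmH
  refine ⟨a, haG, fun w hw => ?_⟩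
  have hwH : b.coord i w ∈ H := ⟨w, hw, rfl⟩
  rw [AddSubgroup.cyclic_of_min hleast, AddSubgroup.mem_closure_singleton] at hwH
  obtain ⟨q, hq⟩ := hwH
  exact ⟨q, hq.symm⟩

variable {n : ℕ}

theorem Module.Basis.exists_reduced_flag_generator (b : Basis (Fin n) ℝ E) (hb : ∀ j, b j ∈ L)
    (i : Fin n) : ∃ a ∈ L, a ∈ b.flag i.succ ∧
      (∀ w ∈ L, w ∈ b.flag i.succ → ∃ q : ℤ, w - q • a ∈ b.flag i.castSucc) ∧
      ∀ w ∈ L, w ∈ b.flag i.castSucc → ‖a‖ ≤ ‖a + w‖ := by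
  have : FiniteDimensional ℝ E := b.finiteDimensional_of_finite
  obtain ⟨a₀, ha₀, hgen⟩ := b.exists_coord_eq_zsmul hb i
    (G := L ⊓ (b.flag i.succ).toAddSubgroup) inf_le_left
    ⟨hb i, b.self_mem_flag Fin.castSucc_lt_succ⟩
  obtain ⟨ha₀L, ha₀V⟩ : a₀ ∈ L ∧ a₀ ∈ b.flag i.succ := ha₀
  obtain ⟨_, ⟨m, ⟨hmL, hmV⟩, rfl⟩, hmin⟩ := AddSubgroup.exists_norm_le_of_subset
    (S := (a₀ + ·) '' ((L : Set E) ∩ b.flag i.castSucc))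
    (by rintro _ ⟨m, ⟨hmL, -⟩, rfl⟩; exact add_mem ha₀L hmL)
    ⟨a₀, 0, ⟨zero_mem _, zero_mem _⟩, add_zero _⟩
  refine ⟨a₀ + m, add_mem ha₀L hmL, add_mem ha₀V (b.flag_mono (Fin.castSucc_le_succ i) hmV),
    fun w hwL hwV => ?_, fun w hwL hwV => hmin _
      ⟨m + w, ⟨add_mem hmL hwL, add_mem hmV hwV⟩, (add_assoc _ _ _).symm⟩⟩
  obtain ⟨q, hq⟩ := hgen w ⟨hwL, hwV⟩
  have hw : w - q • a₀ ∈ b.flag i.castSucc :=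
    b.mem_flag_castSucc_of_coord_eq_zero (sub_mem hwV (zsmul_mem ha₀V q))
      (by rw [map_sub, map_zsmul, hq, sub_self])
  refine ⟨q, ?_⟩
  rw [smul_add, ← sub_sub]
  exact sub_mem hw (zsmul_mem hmV q)

theorem Module.Basis.exists_reduced_adapted_family (b : Basis (Fin n) ℝ E)
    (hb : ∀ j, b j ∈ L) :
    ∃ c : Fin n → E, (∀ k, AddSubgroup.closure (c '' {j | j.castSucc < k}) =
        L ⊓ (b.flag k).toAddSubgroup) ∧
      ∀ i, ∀ w ∈ L, w ∈ b.flag i.castSucc → ‖c i‖ ≤ ‖c i + w‖ := by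
  choose c hcL hcV hgen hmin using b.exists_reduced_flag_generator hb
  refine ⟨c, fun k => ?_, hmin⟩
  induction k using Fin.induction with
  | zero => simp
  | succ i ih =>
    have hset : {j : Fin n | j.castSucc < i.succ} = insert i {j | j.castSucc < i.castSucc} := by
      ext j; simp [Fin.castSucc_lt_succ_iff, le_iff_eq_or_lt]
    rw [hset, Set.image_insert_eq, Set.insert_eq, AddSubgroup.closure_union, ih]
    apply le_antisymm
    · refine sup_le ?_ (inf_le_inf_left _ (b.flag_mono (Fin.castSucc_le_succ i)))
      exact (AddSubgroup.closure_le _).mpr (by simpa using ⟨hcL i, hcV i⟩)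
    · intro w hw
      obtain ⟨hwL, hwV⟩ : w ∈ L ∧ w ∈ b.flag i.succ := hw
      obtain ⟨q, hq⟩ := hgen i w hwL hwV
      rw [← sub_add_cancel w (q • c i)]
      exact add_mem
        (AddSubgroup.mem_sup_right
          (AddSubgroup.mem_inf.mpr ⟨sub_mem hwL (zsmul_mem (hcL i) q), hq⟩))
        (AddSubgroup.mem_sup_left
          (zsmul_mem (AddSubgroup.subset_closure (Set.mem_singleton _)) q))

end Flag

theorem stronglyReduced_of_flag_eq {n : ℕ}
    (b v : Module.Basis (Fin n) ℝ (EuclideanSpace ℝ (Fin n)))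
    (hflag : b.flag = v.flag) (hv : IsGreedy (latticeOf b) v)
    (hmin : ∀ i, ∀ w ∈ latticeOf b, w ∈ b.flag i.castSucc → ‖b i‖ ≤ ‖b i + w‖) :
    StronglyReduced b := by
  have hint : ∀ i j, ∃ z : ℤ, (z : ℝ) = b.repr (v i) j := by
    intro i j
    have hvi : v i ∈ span ℤ (Set.range b) := by
      rw [← Submodule.mem_toAddSubgroup, Submodule.span_int_eq_addSubgroupClosure]
      exact hv.mem i
    exact (b.mem_span_iff_repr_mem ℤ _).mp hvi j
  choose x hx using hint
  have hvb : ∀ i, v i ∈ b.flag i.succ := fun i => hflag ▸ v.self_mem_flag Fin.castSucc_lt_succ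
  refine ⟨⟨v, x, v.linearIndependent, hv.mem, hv.norm_eq_succMin, fun i => ?_, fun i => ?_,
    fun i j hij => ?_⟩, fun i c => hmin i _ ?_ ?_⟩
  · conv_lhs => rw [← b.sum_repr (v i)]
    simp [← hx, Int.cast_smul_eq_zsmul]
  · intro h0
    have := b.mem_flag_castSucc_of_coord_eq_zero (hvb i) (by simp [← hx, h0])
    rw [hflag, v.self_mem_flag_iff] at this
    exact lt_irrefl _ this
  · have := b.flag_le_ker_coord (Fin.succ_le_castSucc_iff.mpr hij) (hvb i)
    simpa [← hx] using this
  · exact sum_mem fun j _ => zsmul_mem (AddSubgroup.subset_closure (Set.mem_range_self j)) _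
  · refine sum_mem fun j hj => zsmul_mem (b.self_mem_flag ?_) _
    simpa using (Finset.mem_filter.mp hj).2

theorem exists_stronglyReduced_basis {n : ℕ} (b0 : Fin n → EuclideanSpace ℝ (Fin n))
    (h : LinearIndependent ℝ b0) :
    ∃ b : Fin n → EuclideanSpace ℝ (Fin n), LinearIndependent ℝ b ∧
      latticeOf b = latticeOf b0 ∧ StronglyReduced b := by
  set B0 := basisOfLinearIndependentOfCardEqFinrank' b0 h (by simp)
  have hL : latticeOf b0 = (span ℤ (Set.range B0)).toAddSubgroup := by
    simp [latticeOf, B0, Submodule.span_int_eq_addSubgroupClosure]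
  have : DiscreteTopology (latticeOf b0) := by rw [hL]; infer_instance
  have hspan : span ℝ (latticeOf b0 : Set (EuclideanSpace ℝ (Fin n))) = ⊤ :=
    top_unique (B0.span_eq ▸ span_mono (by
      rintro _ ⟨j, rfl⟩
      exact AddSubgroup.subset_closure ⟨j, by simp [B0]⟩))
  obtain ⟨v, hv⟩ := exists_isGreedy hspan (k := n) (by simp)
  set V := basisOfLinearIndependentOfCardEqFinrank' v hv.linearIndependent (by simp)
  have hVL : ∀ j, V j ∈ latticeOf b0 := by simpa [V] using hv.mem
  obtain ⟨c, hc, hmin⟩ := V.exists_reduced_adapted_family hVL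
  have hflag := fun k => V.span_image_eq_flag hVL (hc k)
  have hlat : latticeOf c = latticeOf b0 := by simpa [latticeOf] using hc (Fin.last n)
  have hcind : LinearIndependent ℝ c :=
    linearIndependent_of_top_le_span_of_card_eq_finrank
      (by simpa using (hflag (Fin.last n)).ge) (by simp)
  set C := basisOfLinearIndependentOfCardEqFinrank' c hcind (by simp)
  have hCV : C.flag = V.flag := funext fun k => by simpa [C, Module.Basis.flag] using hflag k
  refine ⟨c, hcind, hlat, ?_⟩
  simpa [C] using stronglyReduced_of_flag_eq C V hCV (by simpa [C, V, hlat] using hv)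
    (by simpa [C, hlat, hCV] using hmin)
end

section
/- If B = {b_1,...,b_n} is a strongly reduced basis of a lattice Λ, then ‖b_i‖ = λ_i for all i ∈ {1,2,3,4} (whenever i ≤ n). -/
open Finset
open scoped RealInnerProductSpace

/-!
Write `v_i = x_ii b_i + (lattice vector of the earlier b_j)` for the vectors realizing the
minima. If `|x_ii| = 1`, then `±v_i` lies in the coset of `b_i`, so `‖b_i‖ ≤ ‖v_i‖ = λ_i`.
Otherwise `|x_ii| ≥ 2`, and the component `β` of `b_i` orthogonal to the earlier `b_j` satisfies
`4‖β‖² ≤ ‖v_i‖² = λ_i²`. Rounding coordinates one at a time, the projection of `b_i` onto the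
span of the earlier `b_j` lies within squared distance `¼ ∑_{j<i} ‖b_j‖² ≤ ((i-1)/4) λ_i²` of their
lattice (by induction, `‖b_j‖ ≤ λ_j ≤ λ_i`), so shortness of `b_i` in its coset gives `‖b_i‖² ≤ λ_i²/4 + ((i-1)/4) λ_i²`, which is
at most `λ_i²` exactly when `i ≤ 4`. The reverse inequality `λ_i ≤ ‖b_i‖` holds for every `i`,
since for `m < i` the vectors `v_1, …, v_m` lie in the span of `b_1, …, b_{i-1}`, so that together
with `b_i` they are `m + 1` independent lattice vectors; induction on `m` gives `λ_{m+1} ≤ ‖b_i‖`.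
-/

section Covering

variable {E : Type*} [NormedAddCommGroup E] [InnerProductSpace ℝ E] {ι : Type*}

theorem norm_add_sq_of_mem_orthogonal {W : Submodule ℝ E} {x y : E} (hx : x ∈ W)
    (hy : y ∈ Wᗮ) : ‖x + y‖ ^ 2 = ‖x‖ ^ 2 + ‖y‖ ^ 2 := by
  simpa only [sq] using
    norm_add_sq_eq_norm_sq_add_norm_sq_real (W.inner_right_of_mem_orthogonal hx hy)

theorem norm_sq_le_norm_add_sq_of_mem_orthogonal {W : Submodule ℝ E} {x y : E} (hx : x ∈ W)
    (hy : y ∈ Wᗮ) : ‖y‖ ^ 2 ≤ ‖x + y‖ ^ 2 := by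
  rw [norm_add_sq_of_mem_orthogonal hx hy]
  linarith [sq_nonneg ‖x‖]

theorem sum_zsmul_mem_span (b : ι → E) (s : Finset ι) (c : ι → ℤ) :
    ∑ j ∈ s, c j • b j ∈ Submodule.span ℝ (b '' s) :=
  Submodule.sum_mem _ fun j hj =>
    Submodule.smul_of_tower_mem _ _ (Submodule.subset_span ⟨j, hj, rfl⟩)

theorem sq_sub_round_le (r : ℝ) : (r - round r) ^ 2 ≤ 1 / 4 := by
  have h := abs_sub_round r
  rw [← sq_abs]
  nlinarith [abs_nonneg (r - round r)]

theorem exists_norm_sub_sum_zsmul_sq_le [DecidableEq ι] (b : ι → E) (s : Finset ι) {t : E}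
    (ht : t ∈ Submodule.span ℝ (b '' s)) :
    ∃ c : ι → ℤ, ‖t - ∑ j ∈ s, c j • b j‖ ^ 2 ≤ (∑ j ∈ s, ‖b j‖ ^ 2) / 4 := by
  induction s using Finset.induction_on generalizing t with
  | empty =>
    rw [coe_empty, Set.image_empty, Submodule.span_empty, Submodule.mem_bot] at ht
    exact ⟨0, by simp [ht]⟩
  | insert a s ha ih =>
    set W := Submodule.span ℝ (b '' s)
    have : FiniteDimensional ℝ W := .span_of_finite ℝ (s.finite_toSet.image b)
    rw [coe_insert, Set.image_insert_eq, Submodule.mem_span_insert] at ht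
    obtain ⟨r, z, hz, rfl⟩ := ht
    obtain ⟨p, hp, β, hβ, hpβ⟩ := W.exists_add_mem_mem_orthogonal (b a)
    set δ := r - round r
    obtain ⟨c, hc⟩ := ih (t := δ • p + z) (W.add_mem (W.smul_mem _ hp) hz)
    refine ⟨Function.update c a (round r), ?_⟩
    have hsum : ∑ j ∈ s, Function.update c a (round r) j • b j = ∑ j ∈ s, c j • b j :=
      sum_congr rfl fun j hj => by rw [Function.update_of_ne (ne_of_mem_of_not_mem hj ha)]
    have hsplit : r • b a + z - ∑ j ∈ insert a s, Function.update c a (round r) j • b j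
        = (δ • p + z - ∑ j ∈ s, c j • b j) + δ • β := by
      rw [sum_insert ha, hsum, Function.update_self, ← Int.cast_smul_eq_zsmul ℝ, hpβ]
      module
    have hβ_le : ‖β‖ ^ 2 ≤ ‖b a‖ ^ 2 := hpβ ▸ norm_sq_le_norm_add_sq_of_mem_orthogonal hp hβ
    have hmem : δ • p + z - ∑ j ∈ s, c j • b j ∈ W :=
      W.sub_mem (W.add_mem (W.smul_mem _ hp) hz) (sum_zsmul_mem_span b s c)
    rw [hsplit, norm_add_sq_of_mem_orthogonal hmem (Wᗮ.smul_mem _ hβ), norm_smul, mul_pow,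
      Real.norm_eq_abs, sq_abs, sum_insert ha]
    nlinarith [sq_sub_round_le r, sq_nonneg δ, sq_nonneg ‖β‖]

theorem norm_sq_le_of_forall_norm_le_add_sum [DecidableEq ι] {u p β : E} (b : ι → E)
    (s : Finset ι) (hu : ∀ c : ι → ℤ, ‖u‖ ≤ ‖u + ∑ j ∈ s, c j • b j‖)
    (hp : p ∈ Submodule.span ℝ (b '' s)) (hβ : β ∈ (Submodule.span ℝ (b '' s))ᗮ)
    (hpβ : u = p + β) : ‖u‖ ^ 2 ≤ ‖β‖ ^ 2 + (∑ j ∈ s, ‖b j‖ ^ 2) / 4 := by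
  set W := Submodule.span ℝ (b '' s)
  obtain ⟨c, hc⟩ := exists_norm_sub_sum_zsmul_sq_le b s hp
  have hmem : p - ∑ j ∈ s, c j • b j ∈ W := W.sub_mem hp (sum_zsmul_mem_span b s c)
  have hcoset : u + ∑ j ∈ s, (-c j) • b j = (p - ∑ j ∈ s, c j • b j) + β := by
    simp only [neg_smul, sum_neg_distrib, hpβ]
    abel
  calc ‖u‖ ^ 2 ≤ ‖u + ∑ j ∈ s, (-c j) • b j‖ ^ 2 := by gcongr; exact hu _
    _ = ‖p - ∑ j ∈ s, c j • b j‖ ^ 2 + ‖β‖ ^ 2 := by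
      rw [hcoset, norm_add_sq_of_mem_orthogonal hmem hβ]
    _ ≤ ‖β‖ ^ 2 + (∑ j ∈ s, ‖b j‖ ^ 2) / 4 := by linarith

theorem norm_le_of_forall_norm_le_add_sum [DecidableEq ι] {u v : E} (b : ι → E) (s : Finset ι)
    (hs : #s ≤ 3) (hu : ∀ c : ι → ℤ, ‖u‖ ≤ ‖u + ∑ j ∈ s, c j • b j‖) {k : ℤ} (hk : k ≠ 0)
    (y : ι → ℤ) (hv : v = k • u + ∑ j ∈ s, y j • b j) (hb : ∀ j ∈ s, ‖b j‖ ≤ ‖v‖) :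
    ‖u‖ ≤ ‖v‖ := by
  rcases eq_or_ne |k| 1 with hk1 | hk1
  · have hkk : k * k = 1 := by rw [← abs_mul_abs_self, hk1, one_mul]
    calc ‖u‖ ≤ ‖u + ∑ j ∈ s, (k * y j) • b j‖ := hu _
      _ = ‖k • v‖ := by
        rw [hv, smul_add, smul_smul, hkk, one_smul, smul_sum]
        simp only [smul_smul]
      _ = ‖v‖ := by rw [norm_zsmul ℝ, Int.norm_cast_real, Int.norm_eq_abs, ← Int.cast_abs, hk1,
        Int.cast_one, one_mul]
  set W := Submodule.span ℝ (b '' s)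
  have : FiniteDimensional ℝ W := .span_of_finite ℝ (s.finite_toSet.image b)
  obtain ⟨p, hp, β, hβ, hpβ⟩ := W.exists_add_mem_mem_orthogonal u
  have hk2 : (4 : ℝ) ≤ (k : ℝ) ^ 2 := by
    have : 2 ≤ |k| := by have := abs_pos.mpr hk; omega
    rw [← sq_abs, ← Int.cast_abs]
    exact_mod_cast pow_le_pow_left₀ zero_le_two this 2
  have hβv : (k : ℝ) ^ 2 * ‖β‖ ^ 2 ≤ ‖v‖ ^ 2 := by
    have hsplit : v = ((k : ℝ) • p + ∑ j ∈ s, y j • b j) + (k : ℝ) • β := by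
      rw [hv, hpβ, ← Int.cast_smul_eq_zsmul ℝ]
      module
    have := norm_sq_le_norm_add_sq_of_mem_orthogonal
      (W.add_mem (W.smul_mem (k : ℝ) hp) (sum_zsmul_mem_span b s y)) (Wᗮ.smul_mem (k : ℝ) hβ)
    rwa [← hsplit, norm_smul, mul_pow, Real.norm_eq_abs, sq_abs] at this
  have hsum : ∑ j ∈ s, ‖b j‖ ^ 2 ≤ 3 * ‖v‖ ^ 2 :=
    calc ∑ j ∈ s, ‖b j‖ ^ 2 ≤ #s • ‖v‖ ^ 2 :=
          sum_le_card_nsmul _ _ _ fun j hj => by gcongr; exact hb j hj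
      _ ≤ 3 * ‖v‖ ^ 2 := by rw [nsmul_eq_mul]; gcongr; exact_mod_cast hs
  have := norm_sq_le_of_forall_norm_le_add_sum b s hu hp hβ hpβ
  refine (pow_le_pow_iff_left₀ (norm_nonneg _) (norm_nonneg _) two_ne_zero).mp ?_
  nlinarith [mul_le_mul_of_nonneg_right hk2 (sq_nonneg ‖β‖)]

end Covering

section SuccessiveMinima

variable {n : ℕ} (L : AddSubgroup (EuclideanSpace ℝ (Fin n)))

theorem succMin_le {m : ℕ} {r : ℝ} (hr : 0 ≤ r) (w : Fin m → EuclideanSpace ℝ (Fin n))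
    (hwL : ∀ j, w j ∈ L) (hw : LinearIndependent ℝ w) (hwr : ∀ j, ‖w j‖ ≤ r) :
    succMin L m ≤ r :=
  csInf_le ⟨0, fun _ h => h.1⟩ ⟨hr, w, hwL, hw, hwr⟩

theorem succMin_mono {a c : ℕ} (hac : a ≤ c) (w : Fin c → EuclideanSpace ℝ (Fin n))
    (hwL : ∀ j, w j ∈ L) (hw : LinearIndependent ℝ w) : succMin L a ≤ succMin L c := by
  refine csInf_le_csInf ⟨0, fun _ h => h.1⟩ ⟨∑ j, ‖w j‖, sum_nonneg fun j _ => norm_nonneg _,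
    w, hwL, hw, fun j => single_le_sum (fun k _ => norm_nonneg (w k)) (mem_univ j)⟩ ?_
  rintro r ⟨hr, u, huL, hu, hur⟩
  exact ⟨hr, u ∘ Fin.castLE hac, fun j => huL _, hu.comp _ (Fin.castLE_injective hac),
    fun j => hur _⟩

theorem succMin_succ_le_norm {m : ℕ} (w : Fin m → EuclideanSpace ℝ (Fin n))
    (hwL : ∀ j, w j ∈ L) (hw : LinearIndependent ℝ w) {u : EuclideanSpace ℝ (Fin n)} (huL : u ∈ L)
    (hu : u ∉ Submodule.span ℝ (Set.range w)) (hwu : ∀ j, ‖w j‖ ≤ ‖u‖) :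
    succMin L (m + 1) ≤ ‖u‖ := by
  refine succMin_le L (norm_nonneg u) (Fin.snoc w u) (Fin.lastCases ?_ fun j => ?_)
    (linearIndependent_finSnoc.mpr ⟨hw, hu⟩) (Fin.lastCases ?_ fun j => ?_) <;>
  simp [huL, hwL, hwu]

end SuccessiveMinima

section Triangular

variable {ι M : Type*} [Fintype ι] [LinearOrder ι] [AddCommGroup M] {b v : ι → M}
  {x : ι → ι → ℤ}

theorem eq_zsmul_add_sum_lt (hvx : ∀ i, v i = ∑ j, x i j • b j)
    (hx0 : ∀ i j, i < j → x i j = 0) (i : ι) :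
    v i = x i i • b i + ∑ j ∈ univ.filter (· < i), x i j • b j := by
  rw [hvx i, ← sum_filter_add_sum_filter_not univ (· < i), add_comm]
  congr 1
  refine sum_eq_single_of_mem i (by simp) fun j hj hji => ?_
  rw [hx0 i j (lt_of_le_of_ne (not_lt.mp (mem_filter.mp hj).2) hji.symm), zero_smul]

theorem mem_span_image_lt [Module ℝ M] (hvx : ∀ i, v i = ∑ j, x i j • b j)
    (hx0 : ∀ i j, i < j → x i j = 0) {i j : ι} (hji : j < i) :
    v j ∈ Submodule.span ℝ (b '' {k | k < i}) := by
  rw [hvx j]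
  refine Submodule.sum_mem _ fun k _ => ?_
  rcases lt_or_ge k i with hki | hik
  · exact Submodule.smul_of_tower_mem _ _ (Submodule.subset_span ⟨k, hki, rfl⟩)
  · rw [hx0 j k (hji.trans_le hik), zero_smul]
    exact zero_mem _

end Triangular

theorem succMin_le_norm_of_triangular {n : ℕ} {b v : Fin n → EuclideanSpace ℝ (Fin n)}
    {x : Fin n → Fin n → ℤ} (hb : LinearIndependent ℝ b) (hv : LinearIndependent ℝ v)
    (hvL : ∀ i, v i ∈ latticeOf b)
    (hvnorm : ∀ i : Fin n, ‖v i‖ = succMin (latticeOf b) ((i : ℕ) + 1))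
    (hvx : ∀ i, v i = ∑ j, x i j • b j) (hx0 : ∀ i j, i < j → x i j = 0) (i : Fin n) :
    succMin (latticeOf b) ((i : ℕ) + 1) ≤ ‖b i‖ := by
  suffices ∀ m ≤ (i : ℕ), succMin (latticeOf b) (m + 1) ≤ ‖b i‖ from this i le_rfl
  intro m
  induction m using Nat.strong_induction_on with
  | _ m ih =>
  intro hmi
  have hmn : m ≤ n := hmi.trans i.isLt.le
  refine succMin_succ_le_norm _ (v ∘ Fin.castLE hmn) (fun j => hvL _)
    (hv.comp _ (Fin.castLE_injective hmn)) (AddSubgroup.subset_closure ⟨i, rfl⟩) ?_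
    fun j => (hvnorm _).trans_le (ih j j.isLt (j.isLt.le.trans hmi))
  refine fun hbi => hb.notMem_span_image (s := {j | j < i}) (lt_irrefl i) ?_
  refine Submodule.span_le.mpr ?_ hbi
  rintro _ ⟨j, rfl⟩
  exact mem_span_image_lt hvx hx0 (Fin.lt_def.mpr (j.isLt.trans_le hmi))

theorem norm_le_succMin_of_stronglyReduced {n : ℕ} {b : Fin n → EuclideanSpace ℝ (Fin n)}
    (hsr : StronglyReduced b) (i : Fin n) (hi : (i : ℕ) < 4) :
    ‖b i‖ ≤ succMin (latticeOf b) ((i : ℕ) + 1) := by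
  obtain ⟨⟨v, x, hv, hvL, hvnorm, hvx, hxne, hx0⟩, hred⟩ := hsr
  induction i using WellFoundedLT.induction with
  | _ i ih =>
  rw [← hvnorm i]
  refine norm_le_of_forall_norm_le_add_sum b (univ.filter (· < i)) ?_ (hred i) (hxne i) (x i)
    (eq_zsmul_add_sum_lt hvx hx0 i) fun j hj => ?_
  · rw [filter_gt_eq_Iio, Fin.card_Iio]
    omega
  · have hji : (j : ℕ) < i := Fin.lt_def.mp (mem_filter.mp hj).2
    rw [hvnorm i]
    exact (ih j (Fin.lt_def.mpr hji) (by omega)).trans <| succMin_mono _ (by omega)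
      (v ∘ Fin.castLE i.isLt) (fun k => hvL _) (hv.comp _ (Fin.castLE_injective _))

theorem stronglyReduced_first_four {n : ℕ} (b : Fin n → EuclideanSpace ℝ (Fin n))
    (hli : LinearIndependent ℝ b) (hsr : StronglyReduced b) (i : Fin n) (hi : (i : ℕ) < 4) :
    ‖b i‖ = succMin (latticeOf b) ((i : ℕ) + 1) := by
  obtain ⟨v, x, hv, hvL, hvnorm, hvx, -, hx0⟩ := hsr.1
  exact le_antisymm (norm_le_succMin_of_stronglyReduced hsr i hi)
    (succMin_le_norm_of_triangular hli hv hvL hvnorm hvx hx0 i)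
end

section
/- Let b_1,...,b_n be linearly independent vectors in ℝ^n with Gram–Schmidt vectors b_1*,...,b_n* and Gram–Schmidt coefficients μ_{i,j} = ⟨b_i, b_j*⟩/‖b_j*‖². For any i, there exist integers x_1,...,x_{i−1} such that the vector w = b_i + Σ_{j<i} x_j b_j satisfies |⟨w, b_j*⟩|/‖b_j*‖² ≤ 1/2 for all j < i, and consequently ‖w‖² ≤ ‖b_i*‖² + (1/4) Σ_{j<i} ‖b_j*‖². -/
open Finset
open scoped RealInnerProductSpace

/-- The Gram–Schmidt orthogonalization of a family indexed by `Fin n`. -/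
noncomputable def gs {n : ℕ} (b : Fin n → EuclideanSpace ℝ (Fin n)) :
    Fin n → EuclideanSpace ℝ (Fin n) :=
  @InnerProductSpace.gramSchmidt ℝ (EuclideanSpace ℝ (Fin n)) _ _ _ (Fin n) _ _
    (inferInstance : WellFoundedLT (Fin n)) b

/-! Size reduction is Babai's nearest-plane step. Treat the indices `j < i` from the largest down,
each time subtracting `round (⟨w, b*_j⟩ / ‖b*_j‖²) • b j` from the current vector `w`;
since `⟨b l, b*_j⟩ = 0` for `l < j`, later steps leave the coordinates already reduced untouched.
The vector `w` lies in the span of the orthogonal family `b*`, its `i`-th coordinate is `1` and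
those beyond `i` vanish, so expanding `‖w‖²` along `b*` gives the bound. -/

variable {E : Type*} [NormedAddCommGroup E] [InnerProductSpace ℝ E]

theorem norm_sq_eq_sum_inner_sq_div_of_mem_span {ι : Type*} [Fintype ι] {v : ι → E}
    (hv : Pairwise fun i j => ⟪v i, v j⟫ = 0) {w : E} (hw : w ∈ Submodule.span ℝ (Set.range v)) :
    ‖w‖ ^ 2 = ∑ j, ⟪w, v j⟫ ^ 2 / ‖v j‖ ^ 2 := by
  obtain ⟨c, rfl⟩ := (Submodule.mem_span_range_iff_exists_fun ℝ).1 hw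
  have hcoeff : ∀ j, ⟪∑ i, c i • v i, v j⟫ = c j * ‖v j‖ ^ 2 := fun j => by
    rw [sum_inner, Finset.sum_eq_single j, real_inner_smul_left, real_inner_self_eq_norm_sq]
    · exact fun i _ hij => by rw [real_inner_smul_left, hv hij, mul_zero]
    · exact fun hj => absurd (mem_univ j) hj
  rw [← real_inner_self_eq_norm_sq, inner_sum]
  refine Finset.sum_congr rfl fun j _ => ?_
  rw [real_inner_smul_right, hcoeff]
  -- a term with `v j = 0` is `0` on both sides, as `x / 0 = 0`
  rcases eq_or_ne ‖v j‖ 0 with h | h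
  · simp [h]
  · field_simp

namespace InnerProductSpace

variable {ι : Type*} [LinearOrder ι] [LocallyFiniteOrderBot ι] [WellFoundedLT ι]

theorem inner_self_gramSchmidt (f : ι → E) (i : ι) :
    ⟪f i, gramSchmidt ℝ f i⟫ = ‖gramSchmidt ℝ f i‖ ^ 2 := by
  conv_lhs => rw [gramSchmidt_def'' ℝ f i]
  rw [inner_add_left, sum_inner, Finset.sum_eq_zero, add_zero, real_inner_self_eq_norm_sq]
  exact fun l hl => by
    rw [real_inner_smul_left, gramSchmidt_orthogonal ℝ f (mem_Iio.1 hl).ne, mul_zero]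

theorem inner_add_sum_smul_gramSchmidt_of_forall_lt (f : ι → E) (v : E) {s : Finset ι} {j : ι}
    (c : ι → ℤ) (hs : ∀ l ∈ s, l < j) :
    ⟪v + ∑ l ∈ s, c l • f l, gramSchmidt ℝ f j⟫ = ⟪v, gramSchmidt ℝ f j⟫ := by
  rw [inner_add_left, sum_inner, Finset.sum_eq_zero, add_zero]
  intro l hl
  rw [← Int.cast_smul_eq_zsmul ℝ, real_inner_smul_left, real_inner_comm,
    gramSchmidt_inv_triangular ℝ f (hs l hl), mul_zero]

theorem exists_abs_inner_add_sum_zsmul_gramSchmidt_le (f : ι → E) (s : Finset ι) :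
    ∀ v : E, ∃ x : ι → ℤ, ∀ j ∈ s,
      |⟪v + ∑ l ∈ s, x l • f l, gramSchmidt ℝ f j⟫| ≤ ‖gramSchmidt ℝ f j‖ ^ 2 / 2 := by
  classical
  induction s using Finset.induction_on_max with
  | empty => exact fun _ => ⟨0, by simp⟩
  | insert a s ha ih =>
    intro v
    set μ := ⟪v, gramSchmidt ℝ f a⟫ / ‖gramSchmidt ℝ f a‖ ^ 2
    obtain ⟨x, hx⟩ := ih (v + (-round μ) • f a)
    have has : a ∉ s := fun h => lt_irrefl a (ha a h)
    have hsum : v + ∑ l ∈ insert a s, Function.update x a (-round μ) l • f l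
        = v + (-round μ) • f a + ∑ l ∈ s, x l • f l := by
      rw [sum_insert has, Function.update_self, add_assoc,
        sum_congr rfl fun l hl => by rw [Function.update_of_ne (ne_of_mem_of_not_mem hl has)]]
    refine ⟨Function.update x a (-round μ), fun j hj => ?_⟩
    rw [hsum]
    rcases mem_insert.1 hj with rfl | hj
    · rw [inner_add_sum_smul_gramSchmidt_of_forall_lt f _ x ha, inner_add_left,
        ← Int.cast_smul_eq_zsmul ℝ, real_inner_smul_left, inner_self_gramSchmidt]
      have hμ : ⟪v, gramSchmidt ℝ f j⟫ = μ * ‖gramSchmidt ℝ f j‖ ^ 2 :=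
        (div_mul_cancel_of_imp fun h => by simp_all).symm
      calc |⟪v, gramSchmidt ℝ f j⟫ + ((-round μ : ℤ) : ℝ) * ‖gramSchmidt ℝ f j‖ ^ 2|
          = |(μ - round μ) * ‖gramSchmidt ℝ f j‖ ^ 2| := by rw [hμ]; push_cast; ring_nf
        _ = |μ - round μ| * ‖gramSchmidt ℝ f j‖ ^ 2 := by
            rw [abs_mul, abs_of_nonneg (sq_nonneg ‖gramSchmidt ℝ f j‖)]
        _ ≤ 1 / 2 * ‖gramSchmidt ℝ f j‖ ^ 2 := by gcongr; exact abs_sub_round μ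
        _ = ‖gramSchmidt ℝ f j‖ ^ 2 / 2 := by ring
    · exact hx j hj

theorem norm_sq_le_of_abs_inner_gramSchmidt_le [Fintype ι] (f : ι → E) {w : E} (i : ι)
    (hw : w ∈ Submodule.span ℝ (Set.range f))
    (hi : ⟪w, gramSchmidt ℝ f i⟫ = ‖gramSchmidt ℝ f i‖ ^ 2)
    (hgt : ∀ j, i < j → ⟪w, gramSchmidt ℝ f j⟫ = 0)
    (hlt : ∀ j < i, |⟪w, gramSchmidt ℝ f j⟫| ≤ ‖gramSchmidt ℝ f j‖ ^ 2 / 2) :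
    ‖w‖ ^ 2 ≤ ‖gramSchmidt ℝ f i‖ ^ 2 +
      1 / 4 * ∑ j ∈ univ.filter (· < i), ‖gramSchmidt ℝ f j‖ ^ 2 := by
  rw [← span_gramSchmidt ℝ f] at hw
  have hterm_lt : ∀ j ∈ univ.filter (· < i),
      ⟪w, gramSchmidt ℝ f j⟫ ^ 2 / ‖gramSchmidt ℝ f j‖ ^ 2 ≤ 1 / 4 * ‖gramSchmidt ℝ f j‖ ^ 2 := by
    intro j hj
    have h := hlt j (mem_filter.1 hj).2
    rcases (sq_nonneg ‖gramSchmidt ℝ f j‖).eq_or_lt with h0 | h0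
    · simp [← h0]
    · rw [div_le_iff₀ h0, ← sq_abs]
      nlinarith [abs_nonneg ⟪w, gramSchmidt ℝ f j⟫]
  have hterm_ge : ∑ j ∈ univ.filter (¬ · < i),
      ⟪w, gramSchmidt ℝ f j⟫ ^ 2 / ‖gramSchmidt ℝ f j‖ ^ 2 = ‖gramSchmidt ℝ f i‖ ^ 2 := by
    rw [sum_eq_single_of_mem i (by simp), hi]
    · rcases (sq_nonneg ‖gramSchmidt ℝ f i‖).eq_or_lt with h0 | h0
      · simp [← h0]
      · field_simp
    · intro j hj hji
      rw [hgt j (lt_of_le_of_ne (not_lt.1 (mem_filter.1 hj).2) hji.symm)]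
      simp
  rw [norm_sq_eq_sum_inner_sq_div_of_mem_span (gramSchmidt_pairwise_orthogonal ℝ f) hw,
    ← sum_filter_add_sum_filter_not univ (· < i), hterm_ge, mul_sum, add_comm]
  gcongr with j hj
  exact hterm_lt j hj

end InnerProductSpace

open InnerProductSpace

theorem size_reduce_exists_general {n : ℕ} (b : Fin n → EuclideanSpace ℝ (Fin n))
    (i : Fin n) :
    ∃ x : Fin n → ℤ,
      (∀ j : Fin n, j < i →
        |(inner ℝ (b i + ∑ l ∈ Finset.univ.filter (· < i), x l • b l) (gs b j) : ℝ)| /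
          ‖gs b j‖ ^ 2 ≤ 1 / 2) ∧
      ‖b i + ∑ l ∈ Finset.univ.filter (· < i), x l • b l‖ ^ 2 ≤
        ‖gs b i‖ ^ 2 + (1 / 4) * ∑ j ∈ Finset.univ.filter (· < i), ‖gs b j‖ ^ 2 := by
  rw [show gs b = gramSchmidt ℝ b from rfl]
  have hlt : ∀ l ∈ univ.filter (· < i), l < i := fun l hl => (mem_filter.1 hl).2
  obtain ⟨x, hx⟩ := exists_abs_inner_add_sum_zsmul_gramSchmidt_le b (univ.filter (· < i)) (b i)
  have hred : ∀ j < i, |⟪b i + ∑ l ∈ univ.filter (· < i), x l • b l, gramSchmidt ℝ b j⟫|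
      ≤ ‖gramSchmidt ℝ b j‖ ^ 2 / 2 := fun j hj => hx j (by simpa using hj)
  refine ⟨x, fun j hj => div_le_of_le_mul₀ (sq_nonneg _) (by norm_num) (by linarith [hred j hj]),
    norm_sq_le_of_abs_inner_gramSchmidt_le b i ?_ ?_ (fun j hij => ?_) hred⟩
  · exact Submodule.add_mem _ (Submodule.subset_span ⟨i, rfl⟩) (Submodule.sum_mem _ fun l _ =>
      Submodule.smul_of_tower_mem _ _ (Submodule.subset_span ⟨l, rfl⟩))
  · rw [inner_add_sum_smul_gramSchmidt_of_forall_lt b _ x hlt, inner_self_gramSchmidt]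
  · rw [inner_add_sum_smul_gramSchmidt_of_forall_lt b _ x fun l hl => (hlt l hl).trans hij,
      real_inner_comm, gramSchmidt_inv_triangular ℝ b hij]

theorem size_reduce_exists {n : ℕ} (b : Fin n → EuclideanSpace ℝ (Fin n))
    (hli : LinearIndependent ℝ b) (i : Fin n) :
    ∃ x : Fin n → ℤ,
      (∀ j : Fin n, j < i →
        |(inner ℝ (b i + ∑ l ∈ Finset.univ.filter (· < i), x l • b l) (gs b j) : ℝ)| /
          ‖gs b j‖ ^ 2 ≤ 1 / 2) ∧
      ‖b i + ∑ l ∈ Finset.univ.filter (· < i), x l • b l‖ ^ 2 ≤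
        ‖gs b i‖ ^ 2 + (1 / 4) * ∑ j ∈ Finset.univ.filter (· < i), ‖gs b j‖ ^ 2 :=
  size_reduce_exists_general b i
end

section
/- For integers n ≥ 4, the quantity f_S(n) = max_{0 ≤ k ≤ n−4} Π_{i=0}^{k−1}((n−k+1)/4 + i/16) satisfies f_S(n) ≤ f_H(n) = Π_{i=1}^n (i+3)/4. -/
theorem fS_le_fH {n : ℕ} (hn : 4 ≤ n) (k : ℕ) (hk : k ≤ n - 4) :
    ∏ i ∈ Finset.range k, (((n : ℝ) - (k : ℝ) + 1) / 4 + (i : ℝ) / 16) ≤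
      ∏ i ∈ Finset.range n, ((i : ℝ) + 4) / 4 := by
  have hkn : k ≤ n := hk.trans (Nat.sub_le n 4)
  have hnk : n - k + k = n := Nat.sub_add_cancel hkn
  have hcast : (0:ℝ) ≤ (n : ℝ) - (k : ℝ) := by
    have := Nat.cast_le (α := ℝ).mpr hkn
    linarith
  calc ∏ i ∈ Finset.range k, (((n : ℝ) - (k : ℝ) + 1) / 4 + (i : ℝ) / 16)
      ≤ ∏ i ∈ Finset.range k, (((n - k + i : ℕ) : ℝ) + 4) / 4 := by
        apply Finset.prod_le_prod
        · intro i _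
          have hi : (0:ℝ) ≤ (i : ℝ) := Nat.cast_nonneg i
          nlinarith
        · intro i _
          have hc : ((n - k + i : ℕ) : ℝ) = (n : ℝ) - (k : ℝ) + i := by
            push_cast [Nat.cast_sub hkn]; ring
          have hi : (0:ℝ) ≤ (i : ℝ) := Nat.cast_nonneg i
          rw [hc]
          linarith
    _ ≤ (∏ i ∈ Finset.range (n - k), ((i : ℝ) + 4) / 4) *
          ∏ i ∈ Finset.range k, (((n - k + i : ℕ) : ℝ) + 4) / 4 := by
        have h1 : (1:ℝ) ≤ ∏ i ∈ Finset.range (n - k), ((i : ℝ) + 4) / 4 := by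
          calc (1:ℝ) = ∏ _i ∈ Finset.range (n - k), (1:ℝ) := Finset.prod_const_one.symm
            _ ≤ _ := by
              apply Finset.prod_le_prod (fun i _ => zero_le_one)
              intro i _
              have hi : (0:ℝ) ≤ (i : ℝ) := Nat.cast_nonneg i
              rw [le_div_iff₀ (by norm_num)]
              linarith
        have h2 : (0:ℝ) ≤ ∏ i ∈ Finset.range k, (((n - k + i : ℕ) : ℝ) + 4) / 4 := by
          apply Finset.prod_nonneg
          intro i _
          positivity
        nlinarith
    _ = ∏ i ∈ Finset.range n, ((i : ℝ) + 4) / 4 := by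
        have h := Finset.prod_range_add (fun i => ((i:ℝ)+4)/4) (n - k) k
        rw [hnk] at h
        rw [h]
end

section
/- Fix n ≥ 4 and 0 ≤ k ≤ n−4. Among all subsets T ⊆ {1,...,n} of size k with T ∩ {1,2,3,4} = ∅, the product Π_{i=5}^n ((i − |T ∩ {1,...,i−1}|)/4 + |T ∩ {1,...,i−1}|/16) is maximized when T = {n−k+1,...,n}. -/
theorem product_maximized_at_top (n k : ℕ) (hn : 4 ≤ n) (hk : k ≤ n - 4)
    (T : Finset ℕ) (hT : T ⊆ Finset.Icc 1 n) (hcard : T.card = k)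
    (hT4 : T ∩ Finset.Icc 1 4 = ∅) :
    ∏ i ∈ Finset.Icc 5 n,
        (((i : ℝ) - ((T ∩ Finset.Icc 1 (i - 1)).card : ℝ)) / 4 +
          ((T ∩ Finset.Icc 1 (i - 1)).card : ℝ) / 16) ≤
      ∏ i ∈ Finset.Icc 5 n,
        (((i : ℝ) - ((Finset.Icc (n - k + 1) n ∩ Finset.Icc 1 (i - 1)).card : ℝ)) / 4 +
          ((Finset.Icc (n - k + 1) n ∩ Finset.Icc 1 (i - 1)).card : ℝ) / 16) := by
  apply Finset.prod_le_prod
  · intro i hi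
    simp only [Finset.mem_Icc] at hi
    have hc : (T ∩ Finset.Icc 1 (i - 1)).card ≤ i := by
      calc (T ∩ Finset.Icc 1 (i - 1)).card ≤ (Finset.Icc 1 (i - 1)).card :=
            Finset.card_le_card Finset.inter_subset_right
        _ = i - 1 := by rw [Nat.card_Icc]; omega
        _ ≤ i := Nat.sub_le _ _
    have hc' : ((T ∩ Finset.Icc 1 (i - 1)).card : ℝ) ≤ (i : ℝ) := by exact_mod_cast hc
    have hi' : (0 : ℝ) ≤ (i : ℝ) := Nat.cast_nonneg _
    linarith
  · intro i hi
    simp only [Finset.mem_Icc] at hi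
    -- key: card of top intersection ≤ card of T intersection
    have hkey : (Finset.Icc (n - k + 1) n ∩ Finset.Icc 1 (i - 1)).card ≤
        (T ∩ Finset.Icc 1 (i - 1)).card := by
      have hsub : T ⊆ (T ∩ Finset.Icc 1 (i - 1)) ∪ Finset.Icc i n := by
        intro x hx
        have := hT hx
        simp only [Finset.mem_Icc] at this
        rcases le_or_gt x (i - 1) with h | h
        · exact Finset.mem_union_left _ (Finset.mem_inter.mpr ⟨hx, by
            simp only [Finset.mem_Icc]; omega⟩)
        · exact Finset.mem_union_right _ (by simp only [Finset.mem_Icc]; omega)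
      have hcard2 : k ≤ (T ∩ Finset.Icc 1 (i - 1)).card + (n + 1 - i) := by
        calc k = T.card := hcard.symm
          _ ≤ ((T ∩ Finset.Icc 1 (i - 1)) ∪ Finset.Icc i n).card :=
              Finset.card_le_card hsub
          _ ≤ (T ∩ Finset.Icc 1 (i - 1)).card + (Finset.Icc i n).card :=
              Finset.card_union_le _ _
          _ = (T ∩ Finset.Icc 1 (i - 1)).card + (n + 1 - i) := by rw [Nat.card_Icc]
      have heq : Finset.Icc (n - k + 1) n ∩ Finset.Icc 1 (i - 1) =
          Finset.Icc (n - k + 1) (i - 1) := by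
        ext x; simp only [Finset.mem_inter, Finset.mem_Icc]; omega
      rw [heq, Nat.card_Icc]
      omega
    have hkey' : ((Finset.Icc (n - k + 1) n ∩ Finset.Icc 1 (i - 1)).card : ℝ) ≤
        ((T ∩ Finset.Icc 1 (i - 1)).card : ℝ) := by exact_mod_cast hkey
    linarith
end

section
/- The polynomial p(σ) = 4σ(4σ+1)(4σ+2)(4σ+3) − 16(n+3σ+1)(n+3σ+2)(n+3σ+3) in the real variable σ, for any fixed real n > 0, has exactly one positive real root, and p is negative on [0, β_n) and positive on (β_n, ∞), where β_n is that root. -/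
private lemma quartic_key (n a b : ℝ) (hn : 0 < n) (ha : 0 < a) (hab : a < b) :
    (4*a*(4*a+1)*(4*a+2)*(4*a+3)) * (16*(n+3*b+1)*(n+3*b+2)*(n+3*b+3)) <
    (4*b*(4*b+1)*(4*b+2)*(4*b+3)) * (16*(n+3*a+1)*(n+3*a+2)*(n+3*a+3)) := by
  have hb : 0 < b := ha.trans hab
  have h1 : (4*a+1)*(n+3*b+1) < (4*b+1)*(n+3*a+1) := by nlinarith
  have h2 : (4*a+2)*(n+3*b+2) < (4*b+2)*(n+3*a+2) := by nlinarith
  have h3 : (4*a+3)*(n+3*b+3) < (4*b+3)*(n+3*a+3) := by nlinarith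
  have p1 : (0:ℝ) < (4*a+1)*(n+3*b+1) := by nlinarith
  have p2 : (0:ℝ) < (4*a+2)*(n+3*b+2) := by nlinarith
  have p3 : (0:ℝ) < (4*a+3)*(n+3*b+3) := by nlinarith
  have q0 : (0:ℝ) < 16*(4*a) := by linarith
  have q1 : (0:ℝ) < 16*(4*a)*((4*a+1)*(n+3*b+1)) := mul_pos q0 p1
  have q2 : (0:ℝ) < 16*(4*a)*((4*a+1)*(n+3*b+1))*((4*a+2)*(n+3*b+2)) := mul_pos q1 p2
  have s1 : 16*(4*a)*((4*a+1)*(n+3*b+1)) < 16*(4*b)*((4*b+1)*(n+3*a+1)) :=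
    mul_lt_mul'' (by linarith) h1 (le_of_lt q0) (le_of_lt p1)
  have s2 : 16*(4*a)*((4*a+1)*(n+3*b+1))*((4*a+2)*(n+3*b+2)) <
      16*(4*b)*((4*b+1)*(n+3*a+1))*((4*b+2)*(n+3*a+2)) :=
    mul_lt_mul'' s1 h2 (le_of_lt q1) (le_of_lt p2)
  have key : 16*(4*a)*((4*a+1)*(n+3*b+1))*((4*a+2)*(n+3*b+2))*((4*a+3)*(n+3*b+3)) <
      16*(4*b)*((4*b+1)*(n+3*a+1))*((4*b+2)*(n+3*a+2))*((4*b+3)*(n+3*a+3)) :=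
    mul_lt_mul'' s2 h3 (le_of_lt q2) (le_of_lt p3)
  have e1 : (4*a*(4*a+1)*(4*a+2)*(4*a+3)) * (16*(n+3*b+1)*(n+3*b+2)*(n+3*b+3))
      = 16*(4*a)*((4*a+1)*(n+3*b+1))*((4*a+2)*(n+3*b+2))*((4*a+3)*(n+3*b+3)) := by ring
  have e2 : (4*b*(4*b+1)*(4*b+2)*(4*b+3)) * (16*(n+3*a+1)*(n+3*a+2)*(n+3*a+3))
      = 16*(4*b)*((4*b+1)*(n+3*a+1))*((4*b+2)*(n+3*a+2))*((4*b+3)*(n+3*a+3)) := by ring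
  rw [e1, e2]; exact key

private lemma quartic_sign_neg {x y u v : ℝ} (h : x*v < u*y) (he : u - v = 0) (hv : 0 < v) :
    x - y < 0 := by
  have hu : u = v := by linarith
  subst hu; nlinarith
private lemma quartic_sign_pos {x y u v : ℝ} (h : u*y < x*v) (he : u - v = 0) (hv : 0 < v) :
    0 < x - y := by
  have hu : u = v := by linarith
  subst hu; nlinarith

theorem quartic_sign_structure (n : ℝ) (hn : 0 < n) :
    ∃ β : ℝ, 0 < β ∧
      (4 * β * (4 * β + 1) * (4 * β + 2) * (4 * β + 3) -
        16 * (n + 3 * β + 1) * (n + 3 * β + 2) * (n + 3 * β + 3) = 0) ∧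
      (∀ σ : ℝ, 0 < σ →
        4 * σ * (4 * σ + 1) * (4 * σ + 2) * (4 * σ + 3) -
          16 * (n + 3 * σ + 1) * (n + 3 * σ + 2) * (n + 3 * σ + 3) = 0 → σ = β) ∧
      (∀ σ : ℝ, 0 ≤ σ → σ < β →
        4 * σ * (4 * σ + 1) * (4 * σ + 2) * (4 * σ + 3) -
          16 * (n + 3 * σ + 1) * (n + 3 * σ + 2) * (n + 3 * σ + 3) < 0) ∧
      (∀ σ : ℝ, β < σ →
        0 < 4 * σ * (4 * σ + 1) * (4 * σ + 2) * (4 * σ + 3) -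
          16 * (n + 3 * σ + 1) * (n + 3 * σ + 2) * (n + 3 * σ + 3)) := by
  have hn1 : (0:ℝ) < n + 1 := by linarith
  have hn2 : (0:ℝ) < n + 2 := by linarith
  have hn3 : (0:ℝ) < n + 3 := by linarith
  set P : ℝ → ℝ := fun σ =>
    4 * σ * (4 * σ + 1) * (4 * σ + 2) * (4 * σ + 3) -
      16 * (n + 3 * σ + 1) * (n + 3 * σ + 2) * (n + 3 * σ + 3) with hP
  have hcont : Continuous P := by
    rw [hP]; continuity
  have hP0 : P 0 < 0 := by
    simp only [hP]
    nlinarith [mul_pos (mul_pos hn1 hn2) hn3]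
  set c : ℝ := n + 10 with hc
  have hPc : 0 < P c := by
    simp only [hP, hc]; nlinarith [sq_nonneg n, sq_nonneg (n+10), hn, mul_pos hn hn,
      mul_pos (mul_pos hn hn) hn, sq_nonneg (n*n)]
  obtain ⟨β, hβmem, hβ⟩ :=
    intermediate_value_Icc (show (0:ℝ) ≤ c by simp only [hc]; linarith) hcont.continuousOn
      (show (0:ℝ) ∈ Set.Icc (P 0) (P c) from ⟨le_of_lt hP0, le_of_lt hPc⟩)
  have hβpos : 0 < β := by
    rcases lt_or_eq_of_le hβmem.1 with h | h
    · exact h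
    · exfalso; rw [← h] at hβ; rw [hβ] at hP0; exact lt_irrefl 0 hP0
  have hDβ : (0:ℝ) < 16*(n+3*β+1)*(n+3*β+2)*(n+3*β+3) := by
    have b1 : (0:ℝ) < n+3*β+1 := by linarith
    have b2 : (0:ℝ) < n+3*β+2 := by linarith
    have b3 : (0:ℝ) < n+3*β+3 := by linarith
    have : (0:ℝ) < 16*(n+3*β+1) := by linarith
    exact mul_pos (mul_pos this b2) b3
  have hβ' : 4*β*(4*β+1)*(4*β+2)*(4*β+3) - 16*(n+3*β+1)*(n+3*β+2)*(n+3*β+3) = 0 := by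
    have := hβ; simp only [hP] at this; linarith [this]
  have neg_of_lt : ∀ σ : ℝ, 0 ≤ σ → σ < β → P σ < 0 := by
    intro σ hσ0 hσβ
    rcases eq_or_lt_of_le hσ0 with h | h
    · simp only [hP, ← h]
      nlinarith [mul_pos (mul_pos hn1 hn2) hn3]
    · have k := quartic_key n σ β hn h hσβ
      have := quartic_sign_neg (x := 4*σ*(4*σ+1)*(4*σ+2)*(4*σ+3))
        (y := 16*(n+3*σ+1)*(n+3*σ+2)*(n+3*σ+3))
        (u := 4*β*(4*β+1)*(4*β+2)*(4*β+3))
        (v := 16*(n+3*β+1)*(n+3*β+2)*(n+3*β+3)) k hβ' hDβ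
      simp only [hP]; linarith
  have pos_of_gt : ∀ σ : ℝ, β < σ → 0 < P σ := by
    intro σ hβσ
    have k := quartic_key n β σ hn hβpos hβσ
    have := quartic_sign_pos (x := 4*σ*(4*σ+1)*(4*σ+2)*(4*σ+3))
      (y := 16*(n+3*σ+1)*(n+3*σ+2)*(n+3*σ+3))
      (u := 4*β*(4*β+1)*(4*β+2)*(4*β+3))
      (v := 16*(n+3*β+1)*(n+3*β+2)*(n+3*β+3)) k hβ' hDβ
    simp only [hP]; linarith
  refine ⟨β, hβpos, by simpa [hP] using hβ, ?_, neg_of_lt, pos_of_gt⟩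
  intro σ hσ hσ0
  rcases lt_trichotomy σ β with h | h | h
  · have := neg_of_lt σ (le_of_lt hσ) h
    simp only [hP] at this; linarith
  · exact h
  · have := pos_of_gt σ h
    simp only [hP] at this; linarith
end
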